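/- Let α ∈ ℂ and n ≥ 1. For every x ∈ ℂ with x·(x − i/2)·(x + i/2) ≠ 0, ϑ_1(α,x)·(𝒟(𝒟ϑ_n(α,·)))(x) = n·(n−1)·ϑ_{n−1}(α,x), where ϑ_1(α,x) = α² + x². -/

import Mathlib

open Complex Finset

/-- Wilson divided-difference operator. -/
noncomputable def Dw (f : ℂ → ℂ) (x : ℂ) : ℂ :=
  (f (x + I/2) - f (x - I/2)) / (2 * I * x)

/-- ϑ_n(α,x) = ∏_{j=0}^{n−1}((α + j)² + x²) = (α+ix)_n (α−ix)_n. -/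
noncomputable def vartheta (α : ℂ) (n : ℕ) (x : ℂ) : ℂ :=
  ∏ j ∈ Finset.range n, ((α + j)^2 + x^2)

/-!
Since (α + j)² + x² = (α + j + ix)(α + j − ix), ϑ_n(α,x) = (α+ix)_n (α−ix)_n, and the shifts
x ↦ x ± i/2 move the two Pochhammer arguments by 1/2 in opposite directions. Peeling one factor
off each Pochhammer symbol, from the left or from the right, gives the lowering relation
𝒟ϑ_{n+1}(α,·) = (n+1)·ϑ_n(α+1/2,·). Applying it twice gives 𝒟²ϑ_n(α,·) = n(n−1)·ϑ_{n−2}(α+1,·),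
and ϑ_1(α,x)·ϑ_{n−2}(α+1,x) = ϑ_{n−1}(α,x).
-/

section Pochhammer

variable {R : Type*} [CommRing R]

lemma ascPochhammer_succ_eval_sub_one (n : ℕ) (c : R) :
    (ascPochhammer R (n + 1)).eval (c - 1) = (c - 1) * (ascPochhammer R n).eval c := by
  simp [ascPochhammer_succ_left]

lemma ascPochhammer_succ_eval_mul_sub_mul (n : ℕ) (c d : R) :
    (ascPochhammer R (n + 1)).eval (c - 1) * (ascPochhammer R (n + 1)).eval d
        - (ascPochhammer R (n + 1)).eval c * (ascPochhammer R (n + 1)).eval (d - 1)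
      = (n + 1) * (c - d) * (ascPochhammer R n).eval c * (ascPochhammer R n).eval d := by
  rw [ascPochhammer_succ_eval_sub_one, ascPochhammer_succ_eval_sub_one, ascPochhammer_succ_eval,
    ascPochhammer_succ_eval]
  ring

end Pochhammer

lemma vartheta_eq_ascPochhammer (α : ℂ) (n : ℕ) (x : ℂ) :
    vartheta α n x = (ascPochhammer ℂ n).eval (α + I * x) * (ascPochhammer ℂ n).eval (α - I * x) := by
  induction n with
  | zero => simp [vartheta]
  | succ n ih =>
    rw [vartheta, prod_range_succ, ← vartheta, ih, ascPochhammer_succ_eval, ascPochhammer_succ_eval]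
    linear_combination (ascPochhammer ℂ n).eval (α + I * x) * (ascPochhammer ℂ n).eval (α - I * x)
      * x ^ 2 * I_sq

lemma vartheta_succ (α : ℂ) (n : ℕ) (x : ℂ) :
    vartheta α (n + 1) x = (α ^ 2 + x ^ 2) * vartheta (α + 1) n x := by
  simp only [vartheta, prod_range_succ', Nat.cast_add, Nat.cast_one, Nat.cast_zero, add_zero]
  rw [mul_comm]
  congr 1
  exact prod_congr rfl fun j _ ↦ by ring

lemma Dw_congr {f g : ℂ → ℂ} {x : ℂ} (hp : f (x + I / 2) = g (x + I / 2))
    (hm : f (x - I / 2) = g (x - I / 2)) : Dw f x = Dw g x := by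
  rw [Dw, Dw, hp, hm]

lemma Dw_const_mul (c : ℂ) (f : ℂ → ℂ) (x : ℂ) : Dw (fun t ↦ c * f t) x = c * Dw f x := by
  rw [Dw, Dw, ← mul_sub, mul_div_assoc]

lemma Dw_vartheta (α : ℂ) (n : ℕ) {x : ℂ} (hx : x ≠ 0) :
    Dw (vartheta α n) x = n * vartheta (α + 1 / 2) (n - 1) x := by
  cases n with
  | zero => simp [Dw, vartheta]
  | succ n =>
    have hc₁ : α + I * (x + I / 2) = α + 1 / 2 + I * x - 1 := by linear_combination I_sq / 2
    have hd : α - I * (x + I / 2) = α + 1 / 2 - I * x := by linear_combination -I_sq / 2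
    have hc : α + I * (x - I / 2) = α + 1 / 2 + I * x := by linear_combination -I_sq / 2
    have hd₁ : α - I * (x - I / 2) = α + 1 / 2 - I * x - 1 := by linear_combination I_sq / 2
    have h2Ix : 2 * I * x ≠ 0 := by simp [I_ne_zero, hx]
    rw [Dw, vartheta_eq_ascPochhammer, vartheta_eq_ascPochhammer, vartheta_eq_ascPochhammer,
      hc₁, hd, hc, hd₁, ascPochhammer_succ_eval_mul_sub_mul]
    field_simp
    push_cast
    ring

theorem stmt_7_general (α : ℂ) (n : ℕ) :
    ∀ x : ℂ, x * (x - I/2) * (x + I/2) ≠ 0 →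
      (α^2 + x^2) * Dw (Dw (fun t => vartheta α n t)) x
        = (n : ℂ) * ((n : ℂ) - 1) * vartheta α (n-1) x := by
  intro x hx
  obtain ⟨⟨hx0, hxm⟩, hxp⟩ : (x ≠ 0 ∧ x - I / 2 ≠ 0) ∧ x + I / 2 ≠ 0 := by
    simpa only [mul_ne_zero_iff] using hx
  have hDD : Dw (Dw (vartheta α n)) x = n * ((n - 1 : ℕ) * vartheta (α + 1) (n - 1 - 1) x) := by
    rw [Dw_congr (g := fun t ↦ n * vartheta (α + 1 / 2) (n - 1) t) (Dw_vartheta α n hxp)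
      (Dw_vartheta α n hxm), Dw_const_mul, Dw_vartheta _ _ hx0, add_assoc, add_halves]
  rw [hDD]
  rcases n with _ | _ | n
  · simp
  · simp
  · rw [Nat.add_sub_cancel, vartheta_succ]
    push_cast
    ring

theorem stmt_7 (α : ℂ) (n : ℕ) (hn : 1 ≤ n) :
    ∀ x : ℂ, x * (x - I/2) * (x + I/2) ≠ 0 →
      (α^2 + x^2) * Dw (Dw (fun t => vartheta α n t)) x
        = (n : ℂ) * ((n : ℂ) - 1) * vartheta α (n-1) x :=
  stmt_7_general α n
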